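/- There exists a unique group homomorphism ϖ : B_n → ℤ^n ⋊ S_n with ϖ(σ_k) = (e_k + e_{k+1}, (k, k+1)) for every k ∈ {1,…,n−1}. Moreover, composing ϖ with the injective homomorphism ι : ℤ^n ⋊ S_n → Perm({1,…,n} × ℤ), ι(ℓ, π)(a, b) = (π(a), b + ℓ(π(a))), yields the symmetric Gauss-Epple homomorphism symGE, i.e. ι ∘ ϖ is the homomorphism sending σ_k to the permutation fixing (a,b) when a ∉ {k,k+1}, sending (k,b) to (k+1,b+1), and sending (k+1,b) to (k,b+1). -/

import Mathlib

/-- The braid relations. -/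
def braidRels (n : ℕ) : Set (FreeGroup (Fin (n - 1))) :=
  {r | (∃ i j : Fin (n - 1), (j : ℕ) = (i : ℕ) + 1 ∧
        r = .of i * .of j * .of i * (.of j * .of i * .of j)⁻¹) ∨
       (∃ i j : Fin (n - 1), (i : ℕ) + 2 ≤ (j : ℕ) ∧
        r = .of i * .of j * (.of j * .of i)⁻¹)}

/-- The braid group `B_n`. -/
abbrev BraidGroup (n : ℕ) := PresentedGroup (braidRels n)

/-- The Artin generator `σ_{k+1}` (0-based index `k`). -/
def braidGen {n : ℕ} (i : Fin (n - 1)) : BraidGroup n := PresentedGroup.of i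

/-- The strand index `k`, viewed inside `Fin n`. -/
def lo {n : ℕ} (k : Fin (n - 1)) : Fin n := ⟨k, by have := k.isLt; omega⟩

/-- The strand index `k + 1`, viewed inside `Fin n`. -/
def hi {n : ℕ} (k : Fin (n - 1)) : Fin n := ⟨(k : ℕ) + 1, by have := k.isLt; omega⟩

/-- The action of `S_n` on `ℤ^n` by permuting coordinates: `(π·ℓ)(i) = ℓ(π⁻¹ i)`. -/
def permAct (n : ℕ) : Equiv.Perm (Fin n) →* MulAut (Multiplicative (Fin n → ℤ)) where
  toFun π :=
    { toFun := fun ℓ => Multiplicative.ofAdd fun i => Multiplicative.toAdd ℓ (π⁻¹ i)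
      invFun := fun ℓ => Multiplicative.ofAdd fun i => Multiplicative.toAdd ℓ (π i)
      left_inv := fun ℓ => by simp
      right_inv := fun ℓ => by simp
      map_mul' := fun ℓ ℓ' => rfl }
  map_one' := by ext ℓ; simp
  map_mul' := fun π ρ => by
    ext ℓ
    simp [Equiv.Perm.mul_apply]

/-- The semidirect product `ℤ^n ⋊ S_n`. -/
abbrev GEGroup (n : ℕ) :=
  SemidirectProduct (Multiplicative (Fin n → ℤ)) (Equiv.Perm (Fin n)) (permAct n)

/-- The value `(e_k, (k, k+1))` of the Gauss-Epple homomorphism `ς` on the generator `σ_k`. -/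
def ςGen {n : ℕ} (k : Fin (n - 1)) : GEGroup n :=
  ⟨Multiplicative.ofAdd (Pi.single (lo k) 1), Equiv.swap (lo k) (hi k)⟩

/-- The symmetric Gauss-Epple permutation attached to `σ_k`: it fixes `(a,b)` for
`a ∉ {k, k+1}`, sends `(k,b)` to `(k+1, b+1)` and `(k+1, b)` to `(k, b+1)`. -/
def symGeFun {n : ℕ} (k : Fin (n - 1)) (p : Fin n × ℤ) : Fin n × ℤ :=
  if p.1 = lo k then (hi k, p.2 + 1)
  else if p.1 = hi k then (lo k, p.2 + 1)
  else p

/-- The value `(e_k + e_{k+1}, (k, k+1))` of the symmetric Gauss-Epple homomorphism `ϖ`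
on the generator `σ_k`. -/
def ϖGen {n : ℕ} (k : Fin (n - 1)) : GEGroup n :=
  ⟨Multiplicative.ofAdd (Pi.single (lo k) 1 + Pi.single (hi k) 1),
    Equiv.swap (lo k) (hi k)⟩

/-!
The elements `(e_a + e_b, (a b))` of `ℤ^n ⋊ S_n` satisfy the braid relations: their `S_n`-parts
do, and for a braid triple `a, b, c` both sides have `ℤ^n`-part `2 (e_a + e_b + e_c)`. Hence `ϖ`
exists, and it is unique because the `σ_k` generate `B_n`. The map `ι` is the natural faithful
action of the wreath product `ℤ ≀ S_n` on `n` copies of `ℤ`.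
-/

open Equiv SemidirectProduct

section BraidGroup

variable {n : ℕ} {G : Type*} [Group G]

theorem BraidGroup.existsUnique_hom (f : Fin (n - 1) → G)
    (hbraid : ∀ i j : Fin (n - 1), (j : ℕ) = i + 1 → f i * f j * f i = f j * f i * f j)
    (hcomm : ∀ i j : Fin (n - 1), (i : ℕ) + 2 ≤ j → Commute (f i) (f j)) :
    ∃! φ : BraidGroup n →* G, ∀ k, φ (braidGen k) = f k := by
  have hrels : ∀ r ∈ braidRels n, FreeGroup.lift f r = 1 := by
    rintro r (⟨i, j, hij, rfl⟩ | ⟨i, j, hij, rfl⟩) <;>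
      simp only [map_mul, map_inv, FreeGroup.lift_apply_of, mul_inv_eq_one]
    exacts [hbraid i j hij, hcomm i j hij]
  refine ⟨PresentedGroup.toGroup hrels, fun k => PresentedGroup.toGroup.of hrels, ?_⟩
  exact fun φ hφ => PresentedGroup.ext fun k => (hφ k).trans (PresentedGroup.toGroup.of hrels).symm

end BraidGroup

lemma swap_braid {α : Type*} [DecidableEq α] {a b c : α}
    (hab : a ≠ b) (hac : a ≠ c) (hbc : b ≠ c) :
    swap a b * swap b c * swap a b = swap b c * swap a b * swap b c := by
  calc swap a b * swap b c * swap a b = swap b a * swap c b * swap b a := by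
        rw [swap_comm a b, swap_comm b c]
    _ = swap c a := by rw [swap_mul_swap_mul_swap hbc.symm hac.symm, swap_comm]
    _ = swap b c * swap a b * swap b c := (swap_mul_swap_mul_swap hab hac).symm

lemma lo_ne_hi {n : ℕ} (k : Fin (n - 1)) : lo k ≠ hi k := by
  simp [lo, hi, Fin.ext_iff]

namespace GEGroup

variable {n : ℕ}

lemma toAdd_permAct_apply (π : Perm (Fin n)) (ℓ : Multiplicative (Fin n → ℤ)) (t : Fin n) :
    Multiplicative.toAdd (permAct n π ℓ) t = Multiplicative.toAdd ℓ (π⁻¹ t) := rfl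

lemma permAct_single (π : Perm (Fin n)) (a : Fin n) (v : ℤ) :
    permAct n π (Multiplicative.ofAdd (Pi.single a v)) =
      Multiplicative.ofAdd (Pi.single (π a) v) := by
  ext t
  simp only [toAdd_permAct_apply, toAdd_ofAdd, Pi.single_apply, Perm.inv_eq_iff_eq]

def pairSwap (a b : Fin n) : GEGroup n :=
  ⟨Multiplicative.ofAdd (Pi.single a 1 + Pi.single b 1), swap a b⟩

lemma ϖGen_eq_pairSwap (k : Fin (n - 1)) : ϖGen k = pairSwap (lo k) (hi k) := rfl

lemma pairSwap_braid {a b c : Fin n} (hab : a ≠ b) (hac : a ≠ c) (hbc : b ≠ c) :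
    pairSwap a b * pairSwap b c * pairSwap a b = pairSwap b c * pairSwap a b * pairSwap b c := by
  ext1
  · simp only [pairSwap, mul_left, mul_right, ofAdd_add, map_mul, MulAut.mul_apply, permAct_single,
      swap_apply_left, swap_apply_right, swap_apply_of_ne_of_ne hac.symm hbc.symm,
      swap_apply_of_ne_of_ne hab hac]
    apply Multiplicative.toAdd.injective
    simp only [toAdd_mul, toAdd_ofAdd]
    abel
  · exact swap_braid hab hac hbc

lemma pairSwap_commute {a b c d : Fin n} (hac : a ≠ c) (had : a ≠ d) (hbc : b ≠ c)
    (hbd : b ≠ d) : Commute (pairSwap a b) (pairSwap c d) := by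
  ext1
  · simp only [pairSwap, mul_left, ofAdd_add, map_mul, permAct_single,
      swap_apply_of_ne_of_ne hac.symm hbc.symm, swap_apply_of_ne_of_ne had.symm hbd.symm,
      swap_apply_of_ne_of_ne hac had, swap_apply_of_ne_of_ne hbc hbd]
    apply Multiplicative.toAdd.injective
    simp only [toAdd_mul, toAdd_ofAdd]
    abel
  · ext x
    simp only [pairSwap, mul_right, Perm.mul_apply, swap_apply_def]
    split_ifs <;> simp_all

variable (n) in
def toPerm : GEGroup n →* Perm (Fin n × ℤ) where
  toFun x :=
    { toFun p := (x.right p.1, p.2 + Multiplicative.toAdd x.left (x.right p.1))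
      invFun p := (x.right⁻¹ p.1, p.2 - Multiplicative.toAdd x.left p.1)
      left_inv p := by simp
      right_inv p := by simp }
  map_one' := by
    ext p : 1
    simp
  map_mul' x y := by
    ext p : 1
    simp only [mul_right, Perm.mul_apply, mul_left, toAdd_mul, Pi.add_apply, toAdd_permAct_apply,
      Perm.coe_inv, symm_apply_apply, coe_fn_mk, Prod.mk.injEq, true_and]
    ring

lemma toPerm_apply (x : GEGroup n) (p : Fin n × ℤ) :
    toPerm n x p = (x.right p.1, p.2 + Multiplicative.toAdd x.left (x.right p.1)) := rfl

lemma toPerm_injective : Function.Injective (toPerm n) := by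
  refine (injective_iff_map_eq_one _).2 fun x hx => ?_
  have hfix (p : Fin n × ℤ) : toPerm n x p = p := by rw [hx]; rfl
  have hright (t : Fin n) : x.right t = t := congrArg Prod.fst (hfix (t, 0))
  ext1
  · apply Multiplicative.toAdd.injective
    funext t
    simpa [toPerm_apply, hright] using congrArg Prod.snd (hfix (t, 0))
  · exact Equiv.ext hright

lemma toPerm_pairSwap {a b : Fin n} (hab : a ≠ b) (p : Fin n × ℤ) :
    toPerm n (pairSwap a b) p =
      if p.1 = a then (b, p.2 + 1) else if p.1 = b then (a, p.2 + 1) else p := by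
  obtain ⟨t, m⟩ := p
  simp only [toPerm_apply, pairSwap, toAdd_ofAdd, Pi.add_apply]
  split_ifs with hta htb
  · subst hta; simp [hab.symm]
  · subst htb; simp [hab]
  · simp [swap_apply_of_ne_of_ne hta htb, hta, htb]

end GEGroup

open GEGroup in
theorem symmetric_gauss_epple_factors_general (n : ℕ) :
    (∃! ϖ : BraidGroup n →* GEGroup n,
      ∀ k : Fin (n - 1), ϖ (braidGen k) = ϖGen k) ∧
    ∃ ι : GEGroup n →* Equiv.Perm (Fin n × ℤ),
      Function.Injective ι ∧
      (∀ (x : GEGroup n) (p : Fin n × ℤ),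
        ι x p = (x.right p.1, p.2 + Multiplicative.toAdd x.left (x.right p.1))) ∧
      ∀ ϖ : BraidGroup n →* GEGroup n,
        (∀ k : Fin (n - 1), ϖ (braidGen k) = ϖGen k) →
        ∀ (k : Fin (n - 1)) (p : Fin n × ℤ), (ι.comp ϖ) (braidGen k) p = symGeFun k p := by
  have hbraid (i j : Fin (n - 1)) (hij : (j : ℕ) = i + 1) :
      ϖGen i * ϖGen j * ϖGen i = ϖGen j * ϖGen i * ϖGen j := by
    have hhi : hi i = lo j := Fin.ext hij.symm
    rw [ϖGen_eq_pairSwap, ϖGen_eq_pairSwap, hhi]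
    exact pairSwap_braid (Fin.ne_of_val_ne (by simp [lo]; omega))
      (Fin.ne_of_val_ne (by simp [lo, hi]; omega)) (lo_ne_hi j)
  have hcomm (i j : Fin (n - 1)) (hij : (i : ℕ) + 2 ≤ j) : Commute (ϖGen i) (ϖGen j) :=
    pairSwap_commute (Fin.ne_of_val_ne (by simp [lo]; omega))
      (Fin.ne_of_val_ne (by simp [lo, hi]; omega)) (Fin.ne_of_val_ne (by simp [lo, hi]; omega))
      (Fin.ne_of_val_ne (by simp [hi]; omega))
  refine ⟨BraidGroup.existsUnique_hom ϖGen hbraid hcomm, toPerm n, toPerm_injective,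
    toPerm_apply, fun ϖ hϖ k p => ?_⟩
  rw [MonoidHom.comp_apply, hϖ k, ϖGen_eq_pairSwap, toPerm_pairSwap (lo_ne_hi k)]
  rfl

/-- There is a unique homomorphism `ϖ : B_n → ℤ^n ⋊ S_n` with
`ϖ(σ_k) = (e_k + e_{k+1}, (k,k+1))`; composing with the injective homomorphism
`ι(ℓ,π)(a,b) = (π a, b + ℓ(π a))` yields the symmetric Gauss-Epple homomorphism. -/
theorem symmetric_gauss_epple_factors (n : ℕ) (hn : 2 ≤ n) :
    (∃! ϖ : BraidGroup n →* GEGroup n,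
      ∀ k : Fin (n - 1), ϖ (braidGen k) = ϖGen k) ∧
    ∃ ι : GEGroup n →* Equiv.Perm (Fin n × ℤ),
      Function.Injective ι ∧
      (∀ (x : GEGroup n) (p : Fin n × ℤ),
        ι x p = (x.right p.1, p.2 + Multiplicative.toAdd x.left (x.right p.1))) ∧
      ∀ ϖ : BraidGroup n →* GEGroup n,
        (∀ k : Fin (n - 1), ϖ (braidGen k) = ϖGen k) →
        ∀ (k : Fin (n - 1)) (p : Fin n × ℤ), (ι.comp ϖ) (braidGen k) p = symGeFun k p :=
  symmetric_gauss_epple_factors_general n
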